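/- There exist 2×2 PSD matrices A, B and a non-negative increasing convex function g on [0,∞) with g(0)=0 such that ‖g(A)−g(B)‖_∞ < ‖g(|A−B|)‖_∞. Concretely, g(x) = x + max(x−1, 0), A = diag(0.9, 0.6), and B = [[0.8, 0.5],[0.5, 0.4]] give a counterexample. -/

import Mathlib

open Matrix
open scoped ComplexOrder

/-- `f` applied to a matrix via the spectral decomposition (junk value `0` if
the matrix is not Hermitian). -/
noncomputable def matFun {n : ℕ} (f : ℝ → ℝ) (A : Matrix (Fin n) (Fin n) ℂ) :
    Matrix (Fin n) (Fin n) ℂ :=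
  if hA : A.IsHermitian then
    (hA.eigenvectorUnitary : Matrix (Fin n) (Fin n) ℂ) *
      Matrix.diagonal (fun i => (f (hA.eigenvalues i) : ℂ)) *
      (star hA.eigenvectorUnitary : Matrix (Fin n) (Fin n) ℂ)
  else 0

/-- The eigenvalues of a Hermitian matrix, sorted in non-increasing order
(junk value `0` if the matrix is not Hermitian). -/
noncomputable def eigsDesc {n : ℕ} (A : Matrix (Fin n) (Fin n) ℂ) : Fin n → ℝ :=
  if hA : A.IsHermitian then (fun k => hA.eigenvalues (Tuple.sort hA.eigenvalues (Fin.rev k)))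
  else 0

/-- The absolute value `|X| = (XᴴX)^{1/2}` of a matrix. -/
noncomputable def matAbs {n : ℕ} (X : Matrix (Fin n) (Fin n) ℂ) : Matrix (Fin n) (Fin n) ℂ :=
  (Matrix.posSemidef_conjTranspose_mul_self X).1.eigenvectorUnitary.1 *
    Matrix.diagonal ((↑) ∘ (Real.sqrt ·) ∘ (Matrix.posSemidef_conjTranspose_mul_self X).1.eigenvalues) *
    (star (Matrix.posSemidef_conjTranspose_mul_self X).1.eigenvectorUnitary : Matrix (Fin n) (Fin n) ℂ)

/-- The singular values of `X`, sorted in non-increasing order. -/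
noncomputable def svalsDesc {n : ℕ} (X : Matrix (Fin n) (Fin n) ℂ) : Fin n → ℝ :=
  eigsDesc (matAbs X)

/-- Sum of the first `k` entries of a vector indexed by `Fin n`. -/
noncomputable def kSum {n : ℕ} (μ : Fin n → ℝ) (k : ℕ) : ℝ :=
  ∑ j ∈ Finset.univ.filter (fun j : Fin n => (j : ℕ) < k), μ j

/-- The operator norm: the largest singular value. -/
noncomputable def opNorm {n : ℕ} (X : Matrix (Fin n) (Fin n) ℂ) : ℝ :=
  ⨆ i, svalsDesc X i

/-!
For Hermitian `M` the functional calculus `matFun f M` only depends on `f` on the spectrum, and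
`opNorm M` is the largest `|λ|` over the spectrum; for a real symmetric matrix `[[a, b], [b, c]]`
this is `|a + c| / 2 + √(((a - c) / 2) ^ 2 + b ^ 2)`. Since `g` is the identity on `(-∞, 1]` and
`A`, `|A - B|` have norm at most `1`, we get `g(A) = A` and `g(|A - B|) = |A - B|`, whose norm is
`opNorm (A - B) = 0.15 + √0.2525 ≈ 0.6525`. The eigenvalues `0.6 ± √0.29` of `B` lie on both sides
of the kink of `g`, so `g(B) = c B + d` is an affine function of `B` and `g(A) - g(B)` is an
explicit symmetric matrix, of norm `≈ 0.6501`.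
-/

namespace Matrix

variable {n : ℕ}

lemma IsHermitian.matFun_eq_cfc {A : Matrix (Fin n) (Fin n) ℂ} (hA : A.IsHermitian) (f : ℝ → ℝ) :
    matFun f A = cfc f A := by
  rw [hA.cfc_eq, IsHermitian.cfc, Unitary.conjStarAlgAut_apply, matFun, dif_pos hA]
  rfl

lemma IsHermitian.matFun_eq_self {A : Matrix (Fin n) (Fin n) ℂ} (hA : A.IsHermitian) {f : ℝ → ℝ}
    (hf : ∀ x ∈ spectrum ℝ A, f x = x) : matFun f A = A := by
  rw [hA.matFun_eq_cfc, cfc_congr hf]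
  exact cfc_id' ℝ A hA

lemma IsHermitian.matFun_eq_smul_add_smul_one {A : Matrix (Fin n) (Fin n) ℂ} (hA : A.IsHermitian)
    {f : ℝ → ℝ} {c d : ℝ} (hf : ∀ x ∈ spectrum ℝ A, f x = c * x + d) :
    matFun f A = c • A + d • 1 := by
  rw [hA.matFun_eq_cfc, cfc_congr hf, cfc_add .., cfc_const_mul .., cfc_const .., cfc_id' ℝ A,
    Algebra.algebraMap_eq_smul_one]

lemma matAbs_eq_cfc (X : Matrix (Fin n) (Fin n) ℂ) : matAbs X = cfc Real.sqrt (Xᴴ * X) := by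
  rw [(posSemidef_conjTranspose_mul_self X).1.cfc_eq, IsHermitian.cfc,
    Unitary.conjStarAlgAut_apply, matAbs]
  rfl

lemma isHermitian_matAbs (X : Matrix (Fin n) (Fin n) ℂ) : (matAbs X).IsHermitian := by
  rw [matAbs_eq_cfc]
  exact cfc_predicate (p := IsSelfAdjoint) _ _

lemma spectrum_matAbs_subset_Ici (X : Matrix (Fin n) (Fin n) ℂ) :
    spectrum ℝ (matAbs X) ⊆ Set.Ici 0 := by
  have hX : IsSelfAdjoint (Xᴴ * X) := (posSemidef_conjTranspose_mul_self X).1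
  rw [matAbs_eq_cfc, cfc_map_spectrum Real.sqrt (Xᴴ * X)]
  rintro _ ⟨x, -, rfl⟩
  exact Real.sqrt_nonneg x

lemma IsHermitian.matAbs_eq_cfc_abs {A : Matrix (Fin n) (Fin n) ℂ} (hA : A.IsHermitian) :
    matAbs A = cfc (fun x : ℝ => |x|) A := by
  have hsq : Aᴴ * A = cfc (fun x : ℝ => x * x) A := by
    rw [cfc_mul _ _ A, cfc_id' ℝ A, hA.eq]
  rw [matAbs_eq_cfc, hsq, ← cfc_comp' Real.sqrt (fun x : ℝ => x * x) A]
  simp only [Real.sqrt_mul_self_eq_abs]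

lemma matAbs_matAbs (X : Matrix (Fin n) (Fin n) ℂ) : matAbs (matAbs X) = matAbs X := by
  have hX := isHermitian_matAbs X
  rw [hX.matAbs_eq_cfc_abs, cfc_congr fun x hx => abs_of_nonneg (spectrum_matAbs_subset_Ici X hx)]
  exact cfc_id' ℝ _ hX

lemma opNorm_eq_sSup_spectrum_matAbs (X : Matrix (Fin n) (Fin n) ℂ) :
    opNorm X = sSup (spectrum ℝ (matAbs X)) := by
  have hX := isHermitian_matAbs X
  rw [opNorm, svalsDesc, eigsDesc, dif_pos hX, hX.spectrum_real_eq_range_eigenvalues, ← sSup_range]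
  congr 1
  exact (Fin.revPerm.trans (Tuple.sort hX.eigenvalues)).surjective.range_comp hX.eigenvalues

lemma opNorm_matAbs (X : Matrix (Fin n) (Fin n) ℂ) : opNorm (matAbs X) = opNorm X := by
  rw [opNorm_eq_sSup_spectrum_matAbs, matAbs_matAbs, opNorm_eq_sSup_spectrum_matAbs]

lemma IsHermitian.opNorm_eq_sSup_abs_spectrum {A : Matrix (Fin n) (Fin n) ℂ} (hA : A.IsHermitian) :
    opNorm A = sSup ((fun x : ℝ => |x|) '' spectrum ℝ A) := by
  rw [opNorm_eq_sSup_spectrum_matAbs, hA.matAbs_eq_cfc_abs, cfc_map_spectrum _ A]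

lemma IsHermitian.abs_le_opNorm_of_mem_spectrum {A : Matrix (Fin n) (Fin n) ℂ}
    (hA : A.IsHermitian) {x : ℝ} (hx : x ∈ spectrum ℝ A) : |x| ≤ opNorm A := by
  rw [hA.opNorm_eq_sSup_abs_spectrum]
  exact le_csSup (A.finite_real_spectrum.image _).bddAbove (Set.mem_image_of_mem _ hx)

end Matrix

lemma max_abs_add_abs_sub (x y : ℝ) : max |x + y| |x - y| = |x| + |y| := by
  refine le_antisymm (max_le (abs_add_le x y) (abs_sub x y)) ?_
  rcases le_total 0 x with hx | hx <;> rcases le_total 0 y with hy | hy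
  · exact le_max_of_le_left (by rw [abs_of_nonneg hx, abs_of_nonneg hy]; exact le_abs_self _)
  · exact le_max_of_le_right
      (by rw [abs_of_nonneg hx, abs_of_nonpos hy]; exact le_abs.2 (Or.inl (by linarith)))
  · exact le_max_of_le_right
      (by rw [abs_of_nonpos hx, abs_of_nonneg hy]; exact le_abs.2 (Or.inr (by linarith)))
  · exact le_max_of_le_left
      (by rw [abs_of_nonpos hx, abs_of_nonpos hy]; exact le_abs.2 (Or.inr (by linarith)))

lemma Set.pair_eq_pair_of_add_eq_of_mul_eq {x y a b : ℝ} (hs : x + y = a + b)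
    (hp : x * y = a * b) : ({x, y} : Set ℝ) = {a, b} := by
  have : (x - a) * (x - b) = 0 := by linear_combination x * hs - hp
  rcases mul_eq_zero.mp this with h | h
  · obtain rfl : x = a := by linarith
    obtain rfl : y = b := by linarith
    rfl
  · obtain rfl : x = b := by linarith
    obtain rfl : y = a := by linarith
    exact Set.pair_comm _ _

namespace Matrix

lemma IsHermitian.spectrum_real_eq_pair {A : Matrix (Fin 2) (Fin 2) ℂ} (hA : A.IsHermitian)
    {a b : ℝ} (htr : A.trace = (a + b : ℝ)) (hdet : A.det = (a * b : ℝ)) :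
    spectrum ℝ A = {a, b} := by
  have hrange : Set.range hA.eigenvalues = {hA.eigenvalues 0, hA.eigenvalues 1} := by
    ext; simp [Fin.exists_fin_two, eq_comm]
  rw [hA.spectrum_real_eq_range_eigenvalues, hrange]
  apply Set.pair_eq_pair_of_add_eq_of_mul_eq
  · rw [hA.trace_eq_sum_eigenvalues, Fin.sum_univ_two] at htr
    exact Complex.ofReal_injective (by rw [← htr]; push_cast; rfl)
  · rw [hA.det_eq_prod_eigenvalues, Fin.prod_univ_two] at hdet
    exact Complex.ofReal_injective (by rw [← hdet]; push_cast; rfl)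

lemma isHermitian_fin_two_ofReal (a b c : ℝ) : (!![(a : ℂ), b; b, c]).IsHermitian := by
  ext i j
  fin_cases i <;> fin_cases j <;> simp

lemma spectrum_fin_two_ofReal (a b c : ℝ) :
    spectrum ℝ !![(a : ℂ), b; b, c] =
      {(a + c) / 2 + √(((a - c) / 2) ^ 2 + b ^ 2), (a + c) / 2 - √(((a - c) / 2) ^ 2 + b ^ 2)} := by
  have hR := Real.sq_sqrt (show 0 ≤ ((a - c) / 2) ^ 2 + b ^ 2 by positivity)
  apply (isHermitian_fin_two_ofReal a b c).spectrum_real_eq_pair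
  · rw [trace_fin_two_of]
    push_cast
    ring
  · rw [det_fin_two_of]
    exact_mod_cast (by linear_combination hR : a * c - b * b = _)

lemma opNorm_fin_two_ofReal (a b c : ℝ) :
    opNorm !![(a : ℂ), b; b, c] = |a + c| / 2 + √(((a - c) / 2) ^ 2 + b ^ 2) := by
  rw [(isHermitian_fin_two_ofReal a b c).opNorm_eq_sSup_abs_spectrum, spectrum_fin_two_ofReal,
    Set.image_pair, csSup_pair, max_abs_add_abs_sub, abs_of_nonneg (Real.sqrt_nonneg _), abs_div,
    abs_two]

lemma posSemidef_fin_two_ofReal {a b c : ℝ} (ha : 0 ≤ a) (hc : 0 ≤ c) (hb : b ^ 2 ≤ a * c) :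
    (!![(a : ℂ), b; b, c]).PosSemidef := by
  have hA := isHermitian_fin_two_ofReal a b c
  have hsqrt : √(((a - c) / 2) ^ 2 + b ^ 2) ≤ (a + c) / 2 :=
    Real.sqrt_le_iff.2 ⟨by linarith, by nlinarith⟩
  rw [hA.posSemidef_iff_eigenvalues_nonneg]
  intro i
  have hi := hA.eigenvalues_mem_spectrum_real i
  rw [spectrum_fin_two_ofReal, Set.mem_insert_iff, Set.mem_singleton_iff] at hi
  show 0 ≤ hA.eigenvalues i
  rcases hi with hi | hi <;> rw [hi] <;> linarith [Real.sqrt_nonneg (((a - c) / 2) ^ 2 + b ^ 2)]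

end Matrix

open Matrix

noncomputable def kink (x : ℝ) : ℝ := x + max (x - 1) 0

lemma kink_of_le_one {x : ℝ} (hx : x ≤ 1) : kink x = x := by
  simp [kink, hx]

lemma kink_of_one_le {x : ℝ} (hx : 1 ≤ x) : kink x = 2 * x - 1 := by
  rw [kink, max_eq_left (by linarith)]
  ring

lemma kink_nonneg {x : ℝ} (hx : 0 ≤ x) : 0 ≤ kink x :=
  add_nonneg hx (le_max_right _ _)

lemma monotone_kink : Monotone kink := fun x y h => by
  unfold kink
  gcongr

lemma convexOn_kink : ConvexOn ℝ Set.univ kink :=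
  (convexOn_id convex_univ).add (((convexOn_id convex_univ).sub (concaveOn_const 1 convex_univ)).sup
    (convexOn_const 0 convex_univ))

lemma matFun_kink_of_opNorm_le_one {n : ℕ} {A : Matrix (Fin n) (Fin n) ℂ} (hA : A.IsHermitian)
    (h : opNorm A ≤ 1) : matFun kink A = A :=
  hA.matFun_eq_self fun x hx =>
    kink_of_le_one ((le_abs_self x).trans ((hA.abs_le_opNorm_of_mem_spectrum hx).trans h))

def matA : Matrix (Fin 2) (Fin 2) ℂ := !![0.9, 0; 0, 0.6]

def matB : Matrix (Fin 2) (Fin 2) ℂ := !![0.8, 0.5; 0.5, 0.4]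

lemma matA_eq_ofReal : matA = !![((0.9 : ℝ) : ℂ), (0 : ℝ); (0 : ℝ), (0.6 : ℝ)] := by
  push_cast
  rfl

lemma matB_eq_ofReal : matB = !![((0.8 : ℝ) : ℂ), (0.5 : ℝ); (0.5 : ℝ), (0.4 : ℝ)] := by
  push_cast
  rfl

lemma matA_sub_matB : matA - matB = !![((0.1 : ℝ) : ℂ), (-0.5 : ℝ); (-0.5 : ℝ), (0.2 : ℝ)] := by
  ext i j
  fin_cases i <;> fin_cases j <;> norm_num [matA, matB]

lemma posSemidef_matA : matA.PosSemidef := by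
  rw [matA_eq_ofReal]
  exact posSemidef_fin_two_ofReal (by norm_num) (by norm_num) (by norm_num)

lemma posSemidef_matB : matB.PosSemidef := by
  rw [matB_eq_ofReal]
  exact posSemidef_fin_two_ofReal (by norm_num) (by norm_num) (by norm_num)

lemma matFun_kink_matA : matFun kink matA = matA := by
  rw [matA_eq_ofReal]
  refine matFun_kink_of_opNorm_le_one (isHermitian_fin_two_ofReal _ _ _) ?_
  rw [opNorm_fin_two_ofReal, show ((0.9 - 0.6) / 2) ^ 2 + (0 : ℝ) ^ 2 = 0.15 ^ 2 by norm_num,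
    Real.sqrt_sq (by norm_num)]
  norm_num

/-- `x ↦ c x + d` is the chord of `kink` through the eigenvalues `0.6 ± √0.29` of `matB`. -/
lemma matFun_kink_matB :
    matFun kink matB = (3 / 2 - 20 / 29 * √0.29) • matB + (53 / 58 * √0.29 - 1 / 2) • 1 := by
  have hw2 : √0.29 ^ 2 = 0.29 := Real.sq_sqrt (by norm_num)
  have hw : 0.4 ≤ √0.29 := Real.le_sqrt_of_sq_le (by norm_num)
  rw [matB_eq_ofReal]
  refine (isHermitian_fin_two_ofReal _ _ _).matFun_eq_smul_add_smul_one ?_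
  rw [spectrum_fin_two_ofReal, show ((0.8 - 0.4) / 2) ^ 2 + (0.5 : ℝ) ^ 2 = 0.29 by norm_num,
    show ((0.8 : ℝ) + 0.4) / 2 = 0.6 by norm_num]
  rintro x (rfl | rfl)
  · rw [kink_of_one_le (by linarith)]
    linear_combination (20 / 29) * hw2
  · rw [kink_of_le_one (by linarith [Real.sqrt_nonneg 0.29])]
    linear_combination (-20 / 29) * hw2

lemma matA_sub_smul_matB_add_smul_one (w : ℝ) :
    matA - ((3 / 2 - 20 / 29 * w) • matB + (53 / 58 * w - 1 / 2) • 1) =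
      !![((0.2 - 21 / 58 * w : ℝ) : ℂ), (-3 / 4 + 10 / 29 * w : ℝ);
        (-3 / 4 + 10 / 29 * w : ℝ), (0.5 - 37 / 58 * w : ℝ)] := by
  ext i j
  fin_cases i <;> fin_cases j <;> simp [matA, matB, Complex.ext_iff] <;> norm_num <;> ring

lemma opNorm_matFun_kink_sub_lt : opNorm (matFun kink matA - matFun kink matB) < 0.6524 := by
  have hw2 : √0.29 ^ 2 = 0.29 := Real.sq_sqrt (by norm_num)
  have hw : 0.5385 < √0.29 := Real.lt_sqrt (by norm_num) |>.2 (by norm_num)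
  rw [matFun_kink_matA, matFun_kink_matB, matA_sub_smul_matB_add_smul_one, opNorm_fin_two_ofReal]
  have htrace : |0.2 - 21 / 58 * √0.29 + (0.5 - 37 / 58 * √0.29)| / 2 < 0.0808 := by
    rw [div_lt_iff₀ two_pos, abs_lt]
    constructor <;> nlinarith
  have hradius : √(((0.2 - 21 / 58 * √0.29 - (0.5 - 37 / 58 * √0.29)) / 2) ^ 2 +
      (-3 / 4 + 10 / 29 * √0.29) ^ 2) < 0.5694 := by
    rw [Real.sqrt_lt' (by norm_num)]
    nlinarith
  linarith

lemma lt_opNorm_matFun_kink_matAbs_sub : 0.6524 < opNorm (matFun kink (matAbs (matA - matB))) := by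
  have hsqrt : 0.5024 < √0.2525 := Real.lt_sqrt (by norm_num) |>.2 (by norm_num)
  have hsqrt' : √0.2525 < 0.85 := (Real.sqrt_lt' (by norm_num)).2 (by norm_num)
  have hnorm : opNorm (matA - matB) = 0.15 + √0.2525 := by
    rw [matA_sub_matB, opNorm_fin_two_ofReal]
    norm_num
  rw [matFun_kink_of_opNorm_le_one (isHermitian_matAbs _) (by rw [opNorm_matAbs, hnorm]; linarith),
    opNorm_matAbs, hnorm]
  linarith

/-- There are 2×2 PSD matrices `A, B` and a non-negative increasing convex function
`g` on `[0,∞)` with `g 0 = 0` such that `‖g(A)−g(B)‖_∞ < ‖g(|A−B|)‖_∞`; the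
counterexample is `g(x) = x + (x−1)₊`, `A = diag(0.9, 0.6)`,
`B = [[0.8, 0.5],[0.5, 0.4]]`. -/
theorem counterexample_convex_norm :
    ∃ (A B : Matrix (Fin 2) (Fin 2) ℂ) (g : ℝ → ℝ),
      A.PosSemidef ∧ B.PosSemidef ∧
      A = !![(0.9 : ℂ), 0; 0, 0.6] ∧ B = !![(0.8 : ℂ), 0.5; 0.5, 0.4] ∧
      g = (fun x => x + max (x - 1) 0) ∧
      (∀ x ∈ Set.Ici (0 : ℝ), 0 ≤ g x) ∧ MonotoneOn g (Set.Ici (0 : ℝ)) ∧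
      ConvexOn ℝ (Set.Ici (0 : ℝ)) g ∧ g 0 = 0 ∧
      opNorm (matFun g A - matFun g B) < opNorm (matFun g (matAbs (A - B))) :=
  ⟨matA, matB, kink, posSemidef_matA, posSemidef_matB, rfl, rfl, rfl, fun _ hx => kink_nonneg hx,
    monotone_kink.monotoneOn _, convexOn_kink.subset (Set.subset_univ _) (convex_Ici 0),
    by simp [kink], opNorm_matFun_kink_sub_lt.trans lt_opNorm_matFun_kink_matAbs_sub⟩
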